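/- arXiv:1512.04603 — 3 statements merged into one kernel-verified Lean document; each statement's English description precedes it below -/
import Mathlib

section
/- Let A be a 2g×2g integer matrix with det(A - Aᵀ) = ±1. For every x, w ∈ Λ^{2g}, the element ((tA - Aᵀ)x)ᵀ · (t-1) · (A - tAᵀ)⁻¹ · w̄ of Q = ℚ(t) lies in Λ = ℤ[t,t⁻¹]. (Hence the pairing (v,w) ↦ vᵀ(t-1)(A - tAᵀ)⁻¹w̄ ∈ Q/Λ is well defined in the first variable on the quotient module Λ^{2g}/(tA - Aᵀ)Λ^{2g}.) -/
open Matrix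

set_option maxHeartbeats 2000000
set_option synthInstance.maxHeartbeats 2000000

/-- The variable `t`, i.e. `X`, in the rational function field `Q = ℚ(t)`. -/
noncomputable def tQ : RatFunc ℚ := RatFunc.X

/-- The involution `t ↦ t⁻¹` of `ℚ(t)`, applied as a function. -/
noncomputable def conjQ : RatFunc ℚ → RatFunc ℚ :=
  RatFunc.eval (algebraMap ℚ (RatFunc ℚ)) tQ⁻¹

/-- The Laurent polynomial ring `Λ = ℤ[t,t⁻¹]`, as a subring of `ℚ(t)`. -/
noncomputable def Lam : Subring (RatFunc ℚ) := Subring.closure {tQ, tQ⁻¹}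


/-! Since `tA - Aᵀ = -(A - tAᵀ)ᵀ`, the pairing of `(tA - Aᵀ)x` with `w` collapses to
`-(t - 1) xᵀ w̄`, which lies in `Λ` because the involution preserves `Λ`. The inverse exists
because `det(A - tAᵀ)` is a polynomial whose value at `t = 1` is `det(A - Aᵀ) = ±1`. -/

lemma tQ_transcendental : Transcendental ℚ tQ := by
  rw [tQ, ← RatFunc.algebraMap_X (K := ℚ)]
  exact (transcendental_algebraMap_iff (RatFunc.algebraMap_injective ℚ)).2
    (Polynomial.transcendental_X ℚ)

noncomputable def conjQHom : RatFunc ℚ →+* RatFunc ℚ :=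
  RatFunc.liftRingHom (Polynomial.eval₂RingHom (algebraMap ℚ (RatFunc ℚ)) tQ⁻¹) <|
    nonZeroDivisors_le_comap_nonZeroDivisors_of_injective _ <|
      transcendental_iff_injective.mp fun h => tQ_transcendental (IsAlgebraic.inv_iff.mp h)

theorem coe_conjQHom : ⇑conjQHom = conjQ := by
  funext f
  exact RatFunc.liftRingHom_apply _ _ f

theorem conjQHom_tQ : conjQHom tQ = tQ⁻¹ := by
  rw [coe_conjQHom, conjQ, tQ, RatFunc.eval_X]

theorem tQ_mem_Lam : tQ ∈ Lam := Subring.subset_closure (Set.mem_insert _ _)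

theorem tQ_inv_mem_Lam : tQ⁻¹ ∈ Lam := Subring.subset_closure (Set.mem_insert_of_mem _ rfl)

theorem Lam_le_comap_conjQHom : Lam ≤ Lam.comap conjQHom := by
  refine Subring.closure_le.mpr ?_
  rintro _ (rfl | rfl)
  · simpa [conjQHom_tQ] using tQ_inv_mem_Lam
  · simpa [map_inv₀, conjQHom_tQ] using tQ_mem_Lam

theorem conjQ_mem_Lam {z : RatFunc ℚ} (hz : z ∈ Lam) : conjQ z ∈ Lam := by
  rw [← coe_conjQHom]
  exact Lam_le_comap_conjQHom hz

theorem Subring.dotProduct_mem {R ι : Type*} [CommRing R] [Fintype ι] (S : Subring R)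
    {v w : ι → R} (hv : ∀ i, v i ∈ S) (hw : ∀ i, w i ∈ S) : v ⬝ᵥ w ∈ S :=
  S.sum_mem fun i _ => S.mul_mem (hv i) (hw i)

theorem Matrix.transpose_mulVec_dotProduct_inv_mulVec {R n : Type*} [CommRing R] [Fintype n]
    [DecidableEq n] {B : Matrix n n R} (hB : IsUnit B.det) (x w : n → R) :
    (Bᵀ *ᵥ x) ⬝ᵥ (B⁻¹ *ᵥ w) = x ⬝ᵥ w := by
  rw [mulVec_transpose, dotProduct_mulVec, vecMul_vecMul, mul_nonsing_inv _ hB, vecMul_one]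

open Polynomial in
theorem Matrix.eval_one_det_map_C_sub_X_smul {R n : Type*} [CommRing R] [Fintype n]
    [DecidableEq n] (M N : Matrix n n R) :
    (M.map C - (X : R[X]) • N.map C).det.eval 1 = (M - N).det := by
  rw [← coe_evalRingHom, RingHom.map_det]
  congr 1
  ext i j
  simp

open Polynomial in
theorem isUnit_det_sub_tQ_smul_transpose {n : Type*} [Fintype n] [DecidableEq n]
    (A : Matrix n n ℤ) (hA : (A - Aᵀ).det ≠ 0) :
    IsUnit (A.map Int.cast - tQ • (A.map Int.cast)ᵀ : Matrix n n (RatFunc ℚ)).det := by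
  let M : Matrix n n ℚ := A.map Int.cast
  have hpoly : (M.map C - (X : ℚ[X]) • Mᵀ.map C).det ≠ 0 := by
    intro h
    have heval := Matrix.eval_one_det_map_C_sub_X_smul M Mᵀ
    have hcast : (M - Mᵀ).det = ((A - Aᵀ).det : ℚ) := by
      rw [Int.cast_det]
      congr 1
      ext i j
      simp [M]
    rw [h, eval_zero, hcast] at heval
    exact hA (by exact_mod_cast heval.symm)
  have hmap : (A.map Int.cast - tQ • (A.map Int.cast)ᵀ : Matrix n n (RatFunc ℚ)) =
      (algebraMap ℚ[X] (RatFunc ℚ)).mapMatrix (M.map C - (X : ℚ[X]) • Mᵀ.map C) := by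
    ext i j
    simp [M, tQ, RatFunc.algebraMap_X]
  rw [hmap, ← RingHom.map_det, isUnit_iff_ne_zero]
  exact (map_ne_zero_iff _ (RatFunc.algebraMap_injective ℚ)).mpr hpoly

theorem blanchfield_pairing_well_defined_first_variable (g : ℕ)
    (A : Matrix (Fin (2*g)) (Fin (2*g)) ℤ)
    (hA : (A - Aᵀ).det = 1 ∨ (A - Aᵀ).det = -1)
    (A' : Matrix (Fin (2*g)) (Fin (2*g)) (RatFunc ℚ)) (hA' : A' = A.map Int.cast)
    (x w : Fin (2*g) → RatFunc ℚ) (hx : ∀ i, x i ∈ Lam) (hw : ∀ i, w i ∈ Lam) :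
    ((tQ • A' - A'ᵀ).mulVec x) ⬝ᵥ
      ((tQ - 1) • (A' - tQ • A'ᵀ)⁻¹.mulVec (fun i => conjQ (w i))) ∈ Lam := by
  have hdet : IsUnit (A' - tQ • A'ᵀ).det :=
    hA' ▸ isUnit_det_sub_tQ_smul_transpose A (by rcases hA with h | h <;> simp [h])
  have hneg_transpose : tQ • A' - A'ᵀ = -(A' - tQ • A'ᵀ)ᵀ := by
    rw [transpose_sub, transpose_smul, transpose_transpose, neg_sub]
  rw [dotProduct_smul, hneg_transpose, neg_mulVec, neg_dotProduct,
    transpose_mulVec_dotProduct_inv_mulVec hdet, smul_eq_mul]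
  exact Lam.mul_mem (Lam.sub_mem tQ_mem_Lam Lam.one_mem)
    (Lam.neg_mem (Lam.dotProduct_mem hx fun i => conjQ_mem_Lam (hw i)))
end

section
/- Let A be a 2g×2g integer matrix with det(A - Aᵀ) = ±1. For all v, w ∈ Λ^{2g}, the following exact identity holds in Q = ℚ(t): vᵀ(t-1)(A - tAᵀ)⁻¹w̄ = conj( wᵀ(t-1)(A - tAᵀ)⁻¹v̄ ), where conj is the involution of ℚ(t) sending t to t⁻¹. In particular the Blanchfield pairing of a knot given by this formula is hermitian. -/
/-!
Write `B = A - tAᵀ` and let `x ↦ x̄` be the involution `t ↦ t⁻¹`. Since `A` has integer entries,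
`B̄ = A - t⁻¹Aᵀ = -t⁻¹Bᵀ`, hence `B̄⁻¹ = -t (B⁻¹)ᵀ`. Conjugating `wᵀ(t-1)B⁻¹v̄` therefore gives
`w̄ᵀ(t⁻¹-1)(-t)(B⁻¹)ᵀv = w̄ᵀ(t-1)(B⁻¹)ᵀv = vᵀ(t-1)B⁻¹w̄`. The identity `B̄⁻¹ = -t (B⁻¹)ᵀ` also
holds when `B` is singular, where Mathlib's `B⁻¹` is `0`.
-/

open Matrix

set_option maxHeartbeats 2000000
set_option synthInstance.maxHeartbeats 2000000

namespace Matrix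

variable {n : Type*} [Fintype n] [DecidableEq n] {K L : Type*} [Field K] [Field L]

theorem map_nonsing_inv (f : K →+* L) (M : Matrix n n K) : M⁻¹.map f = (M.map f)⁻¹ := by
  have hdet := f.map_det M
  have hadj := f.map_adjugate M
  simp only [RingHom.mapMatrix_apply] at hdet hadj
  rw [inv_def, inv_def, Ring.inverse_eq_inv, Ring.inverse_eq_inv, ← hdet, ← hadj, ← map_inv₀]
  ext i j
  simp

theorem inv_smul_of_ne_zero {c : K} (hc : c ≠ 0) (M : Matrix n n K) : (c • M)⁻¹ = c⁻¹ • M⁻¹ := by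
  by_cases hM : IsUnit M.det
  · exact inv_smul' M (Units.mk0 c hc) hM
  · have hcM : ¬IsUnit (c • M).det := by
      rwa [det_smul, IsUnit.mul_iff, and_iff_right (isUnit_iff_ne_zero.mpr (pow_ne_zero _ hc))]
    rw [nonsing_inv_apply_not_isUnit _ hM, nonsing_inv_apply_not_isUnit _ hcM, smul_zero]

end Matrix

namespace RatFunc

variable {K : Type*} [Field K]

noncomputable def invX : RatFunc K →+* RatFunc K :=
  liftRingHom (Polynomial.eval₂RingHom (algebraMap K (RatFunc K)) X⁻¹) <|
    nonZeroDivisors_le_comap_nonZeroDivisors_of_injective _ <|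
      transcendental_iff_injective.mp fun h => transcendental_X (IsAlgebraic.inv_iff.mp h)

theorem invX_algebraMap (p : Polynomial K) :
    invX (algebraMap _ _ p) = p.eval₂ (algebraMap K (RatFunc K)) X⁻¹ :=
  liftRingHom_algebraMap _ _ _

theorem invX_C (a : K) : invX (C a) = C a := by
  rw [← algebraMap_C, invX_algebraMap, Polynomial.eval₂_C, algebraMap_C, algebraMap_eq_C]

theorem invX_X : invX (X : RatFunc K) = X⁻¹ := by
  rw [← algebraMap_X, invX_algebraMap, Polynomial.eval₂_X, algebraMap_X]

theorem invX_invX (x : RatFunc K) : invX (invX x) = x := by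
  suffices h : (invX.comp invX).comp (algebraMap (Polynomial K) (RatFunc K)) =
      algebraMap (Polynomial K) (RatFunc K) by
    exact RingHom.congr_fun (IsFractionRing.ringHom_ext (A := Polynomial K)
      (f1 := invX.comp invX) (f2 := RingHom.id _) fun p => RingHom.congr_fun h p) x
  refine Polynomial.ringHom_ext (fun a => ?_) ?_
  · simp [invX_C]
  · simp [invX_X]

end RatFunc

-- `RatFunc.eval` is not multiplicative in general; `conjQ` is, because it agrees with `invX`.
theorem conjQ_eq_invX (x : RatFunc ℚ) : conjQ x = RatFunc.invX x := by
  conv_rhs => rw [← RatFunc.num_div_denom x]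
  rw [map_div₀, RatFunc.invX_algebraMap, RatFunc.invX_algebraMap, conjQ, RatFunc.eval]
  -- the two sides use different `Algebra ℚ (RatFunc ℚ)` instances
  congr 2 <;> exact Subsingleton.elim _ _

section Blanchfield

variable {n K : Type*} [Field K] {σ : K →+* K} {t : K} {A : Matrix n n K}

theorem map_sub_smul_transpose (ht : t ≠ 0) (hσt : σ t = t⁻¹) (hA : A.map σ = A) :
    (A - t • Aᵀ).map σ = -t⁻¹ • (A - t • Aᵀ)ᵀ := by
  ext i j
  have hij : σ (A i j) = A i j := Matrix.ext_iff.mpr hA i j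
  have hji : σ (A j i) = A j i := Matrix.ext_iff.mpr hA j i
  simp only [map_apply, Matrix.sub_apply, Matrix.smul_apply, transpose_apply, smul_eq_mul, map_sub, map_mul,
    hij, hji, hσt, transpose_sub, transpose_smul, transpose_transpose, neg_mul]
  field_simp
  ring

variable [Fintype n] [DecidableEq n]

noncomputable def blanchfieldPairing (σ : K →+* K) (t : K) (A : Matrix n n K) (v w : n → K) : K :=
  v ⬝ᵥ ((t - 1) • ((A - t • Aᵀ)⁻¹ *ᵥ (σ ∘ w)))

theorem map_inv_sub_smul_transpose (ht : t ≠ 0) (hσt : σ t = t⁻¹) (hA : A.map σ = A) :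
    (A - t • Aᵀ)⁻¹.map σ = -t • (A - t • Aᵀ)⁻¹ᵀ := by
  rw [map_nonsing_inv, map_sub_smul_transpose ht hσt hA, inv_smul_of_ne_zero (by simpa),
    transpose_nonsing_inv, inv_neg, inv_inv]

theorem blanchfieldPairing_conj_symm (hσσ : ∀ x, σ (σ x) = x) (ht : t ≠ 0) (hσt : σ t = t⁻¹)
    (hA : A.map σ = A) (v w : n → K) :
    blanchfieldPairing σ t A v w = σ (blanchfieldPairing σ t A w v) := by
  have hconj : σ ∘ ((t - 1) • ((A - t • Aᵀ)⁻¹ *ᵥ (σ ∘ v))) =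
      (t - 1) • ((A - t • Aᵀ)⁻¹ᵀ *ᵥ v) := by
    ext i
    simp only [Function.comp_apply, Pi.smul_apply, smul_eq_mul, map_mul, RingHom.map_mulVec,
      map_inv_sub_smul_transpose ht hσt hA]
    have hσσv : ⇑σ ∘ ⇑σ ∘ v = v := funext fun i => hσσ (v i)
    rw [hσσv, smul_mulVec, Pi.smul_apply, smul_eq_mul, map_sub, map_one, hσt]
    field_simp
    ring
  rw [blanchfieldPairing, blanchfieldPairing, RingHom.map_dotProduct, hconj, dotProduct_smul,
    dotProduct_smul, mulVec_transpose, dotProduct_mulVec, dotProduct_comm]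

end Blanchfield

theorem blanchfield_pairing_hermitian_on_the_nose_general (g : ℕ)
    (A : Matrix (Fin (2*g)) (Fin (2*g)) ℤ)
    (A' : Matrix (Fin (2*g)) (Fin (2*g)) (RatFunc ℚ)) (hA' : A' = A.map Int.cast)
    (v w : Fin (2*g) → RatFunc ℚ) :
    v ⬝ᵥ ((tQ - 1) • (A' - tQ • A'ᵀ)⁻¹.mulVec (fun i => conjQ (w i))) =
      conjQ (w ⬝ᵥ ((tQ - 1) • (A' - tQ • A'ᵀ)⁻¹.mulVec (fun i => conjQ (v i)))) := by
  have hA'_conj : A'.map RatFunc.invX = A' := by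
    subst hA'
    ext i j
    simp
  rw [show conjQ = RatFunc.invX from funext conjQ_eq_invX]
  exact blanchfieldPairing_conj_symm RatFunc.invX_invX RatFunc.X_ne_zero RatFunc.invX_X hA'_conj v w

theorem blanchfield_pairing_hermitian_on_the_nose (g : ℕ)
    (A : Matrix (Fin (2*g)) (Fin (2*g)) ℤ)
    (hA : (A - Aᵀ).det = 1 ∨ (A - Aᵀ).det = -1)
    (A' : Matrix (Fin (2*g)) (Fin (2*g)) (RatFunc ℚ)) (hA' : A' = A.map Int.cast)
    (v w : Fin (2*g) → RatFunc ℚ) (hv : ∀ i, v i ∈ Lam) (hw : ∀ i, w i ∈ Lam) :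
    v ⬝ᵥ ((tQ - 1) • (A' - tQ • A'ᵀ)⁻¹.mulVec (fun i => conjQ (w i))) =
      conjQ (w ⬝ᵥ ((tQ - 1) • (A' - tQ • A'ᵀ)⁻¹.mulVec (fun i => conjQ (v i)))) :=
  blanchfield_pairing_hermitian_on_the_nose_general g A A' hA' v w
end

section
/- Let A = [[-1, 1], [0, -1]] (a Seifert matrix of the trefoil). Then there exist x, w ∈ Λ² (e.g. x = w = e₁, the first standard basis vector) such that ((tA - Aᵀ)x)ᵀ · (t-1) · (tA - Aᵀ)⁻¹ · w does NOT lie in Λ = ℤ[t,t⁻¹]. Consequently, Kearton's formula (v,w) ↦ vᵀ(t-1)(tA - Aᵀ)⁻¹w̄ does not descend to a well-defined pairing on Λ²/(tA - Aᵀ)Λ². -/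
/-!
For the trefoil, `M = tA - Aᵀ = !![1 - t, t; -1, 1 - t]` has determinant `Δ = t² - t + 1`, and
for `x = w = e₁` the formula evaluates to `(t - 1)(t² - 2t) / Δ`. An element of `Λ` has a power
of `t` as denominator, so membership would give `Δ ∣ (t - 1)(t² - 2t) tⁿ` in `ℚ[t]`; as `Δ` is
coprime to `t`, `Δ ∣ (t - 1)(t² - 2t) = (t - 2) Δ - (t - 2)`, impossible for degree reasons.
-/

open Matrix

set_option maxHeartbeats 2000000
set_option synthInstance.maxHeartbeats 2000000

namespace Polynomial

noncomputable def trefoilAlexander : ℚ[X] := X ^ 2 - X + 1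

lemma trefoilAlexander_ne_zero : trefoilAlexander ≠ 0 := by
  intro h
  simpa [trefoilAlexander] using congrArg (eval 0) h

lemma isCoprime_trefoilAlexander_X : IsCoprime trefoilAlexander X :=
  ⟨1, 1 - X, by rw [trefoilAlexander]; ring⟩

lemma trefoilAlexander_not_dvd : ¬ trefoilAlexander ∣ (X - 1) * (X ^ 2 - 2 * X) := by
  intro h
  have hrem : trefoilAlexander ∣ X - C 2 := by
    have : X - C 2 = (X - C 2) * trefoilAlexander - (X - 1) * (X ^ 2 - 2 * X) := by
      rw [trefoilAlexander, map_ofNat]; ring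
    rw [this]
    exact dvd_sub (dvd_mul_left _ _) h
  have hdeg := natDegree_le_of_dvd hrem (X_sub_C_ne_zero 2)
  have h2 : trefoilAlexander.natDegree = 2 := by rw [trefoilAlexander]; compute_degree!
  rw [natDegree_X_sub_C, h2] at hdeg
  omega

end Polynomial

open Polynomial

namespace RatFunc

variable (K : Type*) [Field K]

noncomputable def laurentSubring : Subring (RatFunc K) where
  carrier := {f | ∃ (p : K[X]) (n : ℕ), f * X ^ n = algebraMap K[X] (RatFunc K) p}
  one_mem' := ⟨1, 0, by simp⟩
  zero_mem' := ⟨0, 0, by simp⟩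
  mul_mem' := by
    rintro f g ⟨p, m, hp⟩ ⟨q, n, hq⟩
    exact ⟨p * q, m + n, by rw [map_mul, ← hp, ← hq]; ring⟩
  add_mem' := by
    rintro f g ⟨p, m, hp⟩ ⟨q, n, hq⟩
    refine ⟨p * Polynomial.X ^ n + q * Polynomial.X ^ m, m + n, ?_⟩
    simp only [map_add, map_mul, map_pow, algebraMap_X, ← hp, ← hq]
    ring
  neg_mem' := by
    rintro f ⟨p, n, hp⟩
    exact ⟨-p, n, by rw [map_neg, ← hp, neg_mul]⟩

variable {K}

lemma X_mem_laurentSubring : (X : RatFunc K) ∈ laurentSubring K :=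
  ⟨Polynomial.X, 0, by simp⟩

lemma X_inv_mem_laurentSubring : (X : RatFunc K)⁻¹ ∈ laurentSubring K :=
  ⟨1, 1, by simp [X_ne_zero]⟩

lemma dvd_of_div_mem_laurentSubring {p q : K[X]} (hq : q ≠ 0) (hqX : IsCoprime q Polynomial.X)
    (h : algebraMap K[X] (RatFunc K) p / algebraMap K[X] (RatFunc K) q ∈ laurentSubring K) :
    q ∣ p := by
  obtain ⟨r, n, hr⟩ := h
  have hq' : algebraMap K[X] (RatFunc K) q ≠ 0 := by simpa using hq
  have hpr : Polynomial.X ^ n * p = q * r := by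
    apply algebraMap_injective K
    rw [map_mul, map_mul, ← hr, map_pow, algebraMap_X]
    field_simp
  exact (hqX.pow_right (n := n)).dvd_of_dvd_mul_left ⟨r, hpr⟩

end RatFunc

lemma Lam_le_laurentSubring : Lam ≤ RatFunc.laurentSubring ℚ := by
  rw [Lam, Subring.closure_le]
  rintro f (rfl | rfl)
  exacts [RatFunc.X_mem_laurentSubring, RatFunc.X_inv_mem_laurentSubring]

lemma trefoil_tA_sub_transpose_eq :
    tQ • (!![-1, 1; 0, -1] : Matrix (Fin 2) (Fin 2) ℤ).map (Int.cast : ℤ → RatFunc ℚ) -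
      ((!![-1, 1; 0, -1] : Matrix (Fin 2) (Fin 2) ℤ).map Int.cast)ᵀ =
      !![1 - tQ, tQ; -1, 1 - tQ] := by
  ext i j
  fin_cases i <;> fin_cases j <;> simp <;> ring

lemma algebraMap_trefoilAlexander :
    algebraMap ℚ[X] (RatFunc ℚ) trefoilAlexander = tQ ^ 2 - tQ + 1 := by
  simp [trefoilAlexander, tQ]

lemma tQ_sq_sub_tQ_add_one_ne_zero : tQ ^ 2 - tQ + 1 ≠ 0 := by
  simpa [← algebraMap_trefoilAlexander] using trefoilAlexander_ne_zero

lemma trefoil_kearton_value :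
    (!![1 - tQ, tQ; -1, 1 - tQ] *ᵥ ![1, 0]) ⬝ᵥ ((tQ - 1) • !![1 - tQ, tQ; -1, 1 - tQ]⁻¹ *ᵥ ![1, 0])
      = (tQ - 1) * (tQ ^ 2 - 2 * tQ) / (tQ ^ 2 - tQ + 1) := by
  have hcol : !![1 - tQ, tQ; -1, 1 - tQ] *ᵥ ![1, 0] = ![1 - tQ, -1] := by
    ext i; fin_cases i <;> simp
  have hinv : !![1 - tQ, tQ; -1, 1 - tQ]⁻¹ *ᵥ ![1, 0] = (tQ ^ 2 - tQ + 1)⁻¹ • ![1 - tQ, 1] := by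
    have hdet : (!![1 - tQ, tQ; -1, 1 - tQ]).det = tQ ^ 2 - tQ + 1 := by
      rw [det_fin_two_of]; ring
    rw [inv_def, hdet, Ring.inverse_eq_inv, adjugate_fin_two_of]
    ext i; fin_cases i <;> simp
  rw [hcol, hinv, smul_smul, dotProduct_smul]
  simp only [dotProduct, Fin.sum_univ_two, cons_val_zero, cons_val_one, cons_val_fin_one,
    smul_eq_mul]
  field_simp [tQ_sq_sub_tQ_add_one_ne_zero]
  ring

lemma trefoil_kearton_value_not_mem_Lam :
    (tQ - 1) * (tQ ^ 2 - 2 * tQ) / (tQ ^ 2 - tQ + 1) ∉ Lam := by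
  have hval : (tQ - 1) * (tQ ^ 2 - 2 * tQ) / (tQ ^ 2 - tQ + 1) =
      algebraMap ℚ[X] (RatFunc ℚ) ((X - 1) * (X ^ 2 - 2 * X)) /
        algebraMap ℚ[X] (RatFunc ℚ) trefoilAlexander := by
    simp [algebraMap_trefoilAlexander, tQ, map_ofNat]
  rw [hval]
  exact fun h => trefoilAlexander_not_dvd <| RatFunc.dvd_of_div_mem_laurentSubring
    trefoilAlexander_ne_zero isCoprime_trefoilAlexander_X (Lam_le_laurentSubring h)

theorem kearton_formula_not_well_defined
    (A : Matrix (Fin 2) (Fin 2) ℤ) (hA : A = !![-1, 1; 0, -1])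
    (A' : Matrix (Fin 2) (Fin 2) (RatFunc ℚ)) (hA' : A' = A.map Int.cast) :
    ∃ x w : Fin 2 → RatFunc ℚ, (∀ i, x i ∈ Lam) ∧ (∀ i, w i ∈ Lam) ∧
      ((tQ • A' - A'ᵀ).mulVec x) ⬝ᵥ
        ((tQ - 1) • (tQ • A' - A'ᵀ)⁻¹.mulVec w) ∉ Lam := by
  have hM : tQ • A' - A'ᵀ = !![1 - tQ, tQ; -1, 1 - tQ] := by
    subst hA hA'
    exact trefoil_tA_sub_transpose_eq
  have he₁ : ∀ i, ![(1 : RatFunc ℚ), 0] i ∈ Lam := by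
    intro i
    fin_cases i
    exacts [Lam.one_mem, Lam.zero_mem]
  refine ⟨![1, 0], ![1, 0], he₁, he₁, ?_⟩
  rw [hM, trefoil_kearton_value]
  exact trefoil_kearton_value_not_mem_Lam
end
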